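/- Let λ be a nonzero real number and define φ : U = {(x,y) ∈ ℝ² : y > 0} → ℝ² by φ(x,y) = (λy², 2λxy²). Then φ is smooth and for every p = (x,y) ∈ U, writing (u,v) = φ(p) (note u ≠ 0 on U), the total derivative Dφ(p) satisfies Dφ(p)(1,0) = (0, 2u) and Dφ(p)(x², xy) = (v, 3v²/(2u)). Thus φ pushes the vector fields ∂_x and x²∂_x + xy∂_y of the Lie algebra I₅ forward to 2u∂_v and v∂_u + (3v²/(2u))∂_v, respectively; hence the second-order Kummer–Schwarz system with c = 0 is locally diffeomorphic to the class I₅. -/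

import Mathlib

namespace Stmt14

/-- The map φ(x,y) = (λy², 2λxy²). -/
noncomputable def φ (l : ℝ) : ℝ × ℝ → ℝ × ℝ :=
  fun p => (l * p.2 ^ 2, 2 * l * p.1 * p.2 ^ 2)

lemma hasFDerivAt_φ (l : ℝ) (p : ℝ × ℝ) :
    HasFDerivAt (φ l)
      (((2 * l * p.2) • ContinuousLinearMap.snd ℝ ℝ ℝ).prod
        ((2 * l * p.2 ^ 2) • ContinuousLinearMap.fst ℝ ℝ ℝ +
          (4 * l * p.1 * p.2) • ContinuousLinearMap.snd ℝ ℝ ℝ)) p := by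
  have h2 : HasFDerivAt (fun q : ℝ × ℝ => q.2) (ContinuousLinearMap.snd ℝ ℝ ℝ) p :=
    hasFDerivAt_snd
  have h1 : HasFDerivAt (fun q : ℝ × ℝ => q.1) (ContinuousLinearMap.fst ℝ ℝ ℝ) p :=
    hasFDerivAt_fst
  have hy2 : HasFDerivAt (fun q : ℝ × ℝ => q.2 ^ 2)
      ((2 * p.2) • ContinuousLinearMap.snd ℝ ℝ ℝ) p := by
    have := h2.mul h2
    have heq : (fun q : ℝ × ℝ => q.2 * q.2) = fun q : ℝ × ℝ => q.2 ^ 2 := by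
      funext q; ring
    change HasFDerivAt (fun q : ℝ × ℝ => q.2 * q.2) _ p at this
    rw [heq] at this
    refine this.congr_fderiv ?_
    ext v <;> simp <;> ring
  have hf1 : HasFDerivAt (fun q : ℝ × ℝ => l * q.2 ^ 2)
      ((l * (2 * p.2)) • ContinuousLinearMap.snd ℝ ℝ ℝ) p := by
    have := hy2.const_mul l
    refine this.congr_fderiv ?_
    ext v <;> simp <;> ring
  have hg : HasFDerivAt (fun q : ℝ × ℝ => 2 * l * q.1)
      ((2 * l) • ContinuousLinearMap.fst ℝ ℝ ℝ) p := h1.const_mul (2 * l)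
  have hf2 : HasFDerivAt (fun q : ℝ × ℝ => 2 * l * q.1 * q.2 ^ 2)
      ((2 * l * p.1) • ((2 * p.2) • ContinuousLinearMap.snd ℝ ℝ ℝ) +
        (p.2 ^ 2) • ((2 * l) • ContinuousLinearMap.fst ℝ ℝ ℝ)) p := hg.mul hy2
  have := hf1.prodMk hf2
  refine this.congr_fderiv ?_
  ext v <;> simp <;> ring

/-- For λ ≠ 0, the map φ is smooth on {y > 0} (where u ≠ 0) and pushes the fields ∂ₓ and
x²∂ₓ + xy∂_y of I₅ forward to 2u∂_v and v∂_u + (3v²/(2u))∂_v: the second-order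
Kummer–Schwarz system with c = 0 is locally diffeomorphic to the class I₅. -/
theorem stmt_14 (l : ℝ) (hl : l ≠ 0) :
    ContDiffOn ℝ (⊤ : ℕ∞) (φ l) {p : ℝ × ℝ | p.2 > 0} ∧
    ∀ p ∈ {p : ℝ × ℝ | p.2 > 0},
      (φ l p).1 ≠ 0 ∧
      fderiv ℝ (φ l) p (1, 0) = (0, 2 * (φ l p).1) ∧
      fderiv ℝ (φ l) p (p.1 ^ 2, p.1 * p.2) =
        ((φ l p).2, 3 * (φ l p).2 ^ 2 / (2 * (φ l p).1)) := by
  constructor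
  · apply ContDiff.contDiffOn
    unfold φ
    fun_prop
  · intro p hp
    have hy : p.2 > 0 := hp
    have hy0 : p.2 ≠ 0 := ne_of_gt hy
    have hu : l * p.2 ^ 2 ≠ 0 := by positivity
    have hD := (hasFDerivAt_φ l p).fderiv
    refine ⟨by simpa [φ] using hu, ?_, ?_⟩
    · rw [hD]
      simp [φ]
      ring
    · rw [hD]
      simp [φ]
      constructor
      · ring
      · field_simp
        ring
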